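/- Let (S, 𝒮, μ) be a measure space and f, f̂ : S → ℝ measurable functions. Define π*(s) = 1 iff f(s) > 0, π̂(s) = 1 iff f̂(s) > 0, and the pointwise decision regret r(s) := |f(s)| if π̂(s) ≠ π*(s) and r(s) := 0 otherwise. Suppose the margin condition μ{s : 0 < |f(s)| ≤ ε} ≤ C·ε^α holds for every ε > 0, with constants C ≥ 0 and α ≥ 0, and that the integrated squared estimation error satisfies ∫_S (f̂ − f)² dμ ≤ K²·n^{−2b} for some K ≥ 0, b > 0 and real n ≥ 1. Then ∫_S r dμ ≤ (C + 4K²)·n^{−2b(1+α)/(2+α)}. (The bound follows by applying the ε-truncation inequality ∫ r dμ ≤ Cε^{1+α} + (4/ε)∫(f̂ − f)² dμ with the balancing choice ε = n^{−2b/(2+α)}.) -/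

import Mathlib

/-!
On the set where the estimated and true decisions disagree, `f̂` and `f` have different signs,
so `|f| ≤ |f̂ - f|`. Hence the regret at `s` is at most `ε` when `|f s| ≤ ε` (a set of measure
`≤ C ε^α` by the margin condition) and at most `(f̂ - f)² / ε` otherwise. Integrating gives
`∫ r ≤ C ε^(1+α) + ‖f̂ - f‖₂² / ε`, and `ε = n^(-2b/(2+α))` balances the two terms.
-/

open MeasureTheory

/-- Regret of the decision `a > 0` when the optimal one is `b > 0`; the paper's `r s` is
`decisionRegret (f̂ s) (f s)`. -/
noncomputable def decisionRegret (a b : ℝ) : ℝ :=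
  if (0 < a ↔ 0 < b) then 0 else |b|

lemma abs_le_abs_sub_of_not_pos_iff {a b : ℝ} (h : ¬(0 < a ↔ 0 < b)) : |b| ≤ |a - b| := by
  rcases lt_or_ge 0 b with hb | hb
  · have ha : a ≤ 0 := le_of_not_gt fun ha => h ⟨fun _ => hb, fun _ => ha⟩
    rw [abs_of_pos hb, abs_of_nonpos (by linarith)]
    linarith
  · have ha : 0 < a := by
      by_contra ha
      exact h ⟨fun ha' => absurd ha' ha, fun hb' => absurd hb' (not_lt.mpr hb)⟩
    rw [abs_of_nonpos hb, abs_of_nonneg (by linarith)]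
    linarith

lemma decisionRegret_nonneg (a b : ℝ) : 0 ≤ decisionRegret a b := by
  unfold decisionRegret
  split_ifs
  exacts [le_rfl, abs_nonneg b]

lemma decisionRegret_le {ε : ℝ} (hε : 0 < ε) (a b : ℝ) :
    decisionRegret a b ≤
      {x : ℝ | 0 < |x| ∧ |x| ≤ ε}.indicator (fun _ => ε) b + (a - b) ^ 2 / ε := by
  unfold decisionRegret
  have hsq : 0 ≤ (a - b) ^ 2 / ε := by positivity
  have hind : 0 ≤ {x : ℝ | 0 < |x| ∧ |x| ≤ ε}.indicator (fun _ => ε) b :=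
    Set.indicator_nonneg (fun _ _ => hε.le) b
  split_ifs with h
  · positivity
  have hba := abs_le_abs_sub_of_not_pos_iff h
  rcases (abs_nonneg b).eq_or_lt with hb0 | hb0
  · rw [← hb0]
    positivity
  rcases le_or_gt |b| ε with hbε | hbε
  · rw [Set.indicator_of_mem (show b ∈ {x : ℝ | 0 < |x| ∧ |x| ≤ ε} from ⟨hb0, hbε⟩)]
    linarith
  · have : |b| * ε ≤ (a - b) ^ 2 := by
      rw [← sq_abs (a - b)]
      nlinarith
    have : |b| ≤ (a - b) ^ 2 / ε := (le_div_iff₀ hε).mpr this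
    linarith

/-- The `ε`-truncation inequality. -/
lemma integral_decisionRegret_le {S : Type*} [MeasurableSpace S] {μ : Measure S}
    {f fhat : S → ℝ} (hf : Measurable f) (hint : Integrable (fun s => (fhat s - f s) ^ 2) μ)
    {ε : ℝ} (hε : 0 < ε) (hfin : μ {s | 0 < |f s| ∧ |f s| ≤ ε} ≠ ⊤) :
    ∫ s, decisionRegret (fhat s) (f s) ∂μ ≤
      ε * μ.real {s | 0 < |f s| ∧ |f s| ≤ ε} + (∫ s, (fhat s - f s) ^ 2 ∂μ) / ε := by
  set A := {s | 0 < |f s| ∧ |f s| ≤ ε}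
  have hA : MeasurableSet A :=
    (measurableSet_lt measurable_const hf.abs).inter (measurableSet_le hf.abs measurable_const)
  have hind : Integrable (A.indicator fun _ => ε) μ :=
    (integrableOn_const hfin).integrable_indicator hA
  calc ∫ s, decisionRegret (fhat s) (f s) ∂μ
      ≤ ∫ s, (A.indicator (fun _ => ε) s + (fhat s - f s) ^ 2 / ε) ∂μ :=
        integral_mono_of_nonneg (.of_forall fun s => decisionRegret_nonneg _ _)
          (hind.add (hint.div_const ε)) (.of_forall fun s => decisionRegret_le hε _ _)
    _ = ε * μ.real A + (∫ s, (fhat s - f s) ^ 2 ∂μ) / ε := by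
        rw [integral_add hind (hint.div_const ε), integral_indicator_const _ hA,
          integral_div, smul_eq_mul, mul_comm]

section Balance

variable {n α b : ℝ} (hn : 0 < n) (hα : 2 + α ≠ 0)
include hn hα

lemma balanced_rpow_mul_rpow :
    n ^ (-(2 * b / (2 + α))) * (n ^ (-(2 * b / (2 + α)))) ^ α =
      n ^ (-(2 * b * (1 + α) / (2 + α))) := by
  rw [← Real.rpow_mul hn.le, ← Real.rpow_add hn]
  congr 1
  field_simp
  ring

lemma rpow_div_balanced_rpow :
    n ^ (-(2 * b)) / n ^ (-(2 * b / (2 + α))) = n ^ (-(2 * b * (1 + α) / (2 + α))) := by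
  rw [← Real.rpow_sub hn]
  congr 1
  field_simp
  ring

end Balance

theorem margin_regret_rate_general
    {S : Type*} [MeasurableSpace S] (μ : Measure S)
    (f fhat : S → ℝ) (hf : Measurable f)
    (r : S → ℝ)
    (hr : ∀ s, r s = if (0 < fhat s) ↔ (0 < f s) then 0 else |f s|)
    (C α : ℝ) (hC : 0 ≤ C) (hα : 0 ≤ α)
    (hmargin : ∀ ε : ℝ, 0 < ε →
      μ {s | 0 < |f s| ∧ |f s| ≤ ε} ≤ ENNReal.ofReal (C * ε ^ α))
    (hint : Integrable (fun s => (fhat s - f s) ^ 2) μ)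
    (K b n : ℝ) (hn : 1 ≤ n)
    (hrate : ∫ s, (fhat s - f s) ^ 2 ∂μ ≤ K ^ 2 * n ^ (-(2 * b))) :
    ∫ s, r s ∂μ ≤ (C + 4 * K ^ 2) * n ^ (-(2 * b * (1 + α) / (2 + α))) := by
  have hn0 : 0 < n := by linarith
  have h2α : 2 + α ≠ 0 := by linarith
  set ε := n ^ (-(2 * b / (2 + α)))
  have hε : 0 < ε := by positivity
  have hmarginε := hmargin ε hε
  have hμA : μ.real {s | 0 < |f s| ∧ |f s| ≤ ε} ≤ C * ε ^ α :=
    ENNReal.toReal_le_of_le_ofReal (by positivity) hmarginε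
  calc ∫ s, r s ∂μ
      ≤ ε * μ.real {s | 0 < |f s| ∧ |f s| ≤ ε} + (∫ s, (fhat s - f s) ^ 2 ∂μ) / ε := by
        rw [show r = fun s => decisionRegret (fhat s) (f s) from funext hr]
        exact integral_decisionRegret_le hf hint hε
          (ne_top_of_le_ne_top ENNReal.ofReal_ne_top hmarginε)
    _ ≤ ε * (C * ε ^ α) + K ^ 2 * n ^ (-(2 * b)) / ε := by gcongr
    _ = (C + K ^ 2) * n ^ (-(2 * b * (1 + α) / (2 + α))) := by
        rw [mul_left_comm, balanced_rpow_mul_rpow hn0 h2α, mul_div_assoc (K ^ 2),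
          rpow_div_balanced_rpow hn0 h2α, add_mul]
    _ ≤ (C + 4 * K ^ 2) * n ^ (-(2 * b * (1 + α) / (2 + α))) := by
        gcongr
        linarith [sq_nonneg K]

/-- Quantitative conclusion of the paper's Lemma 2 (margin): if the margin condition
`μ{s : 0 < |f s| ≤ ε} ≤ C ε^α` holds for every `ε > 0` and the integrated squared
estimation error satisfies `∫ (f̂ − f)² dμ ≤ K² n^{−2b}`, then the integrated decision
regret is at most `(C + 4K²) n^{−2b(1+α)/(2+α)}`. -/
theorem margin_regret_rate
    {S : Type*} [MeasurableSpace S] (μ : Measure S)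
    (f fhat : S → ℝ) (hf : Measurable f) (hfhat : Measurable fhat)
    (r : S → ℝ)
    (hr : ∀ s, r s = if (0 < fhat s) ↔ (0 < f s) then 0 else |f s|)
    (C α : ℝ) (hC : 0 ≤ C) (hα : 0 ≤ α)
    (hmargin : ∀ ε : ℝ, 0 < ε →
      μ {s | 0 < |f s| ∧ |f s| ≤ ε} ≤ ENNReal.ofReal (C * ε ^ α))
    (hint : Integrable (fun s => (fhat s - f s) ^ 2) μ)
    (K b n : ℝ) (hK : 0 ≤ K) (hb : 0 < b) (hn : 1 ≤ n)
    (hrate : ∫ s, (fhat s - f s) ^ 2 ∂μ ≤ K ^ 2 * n ^ (-(2 * b))) :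
    ∫ s, r s ∂μ ≤ (C + 4 * K ^ 2) * n ^ (-(2 * b * (1 + α) / (2 + α))) :=
  margin_regret_rate_general μ f fhat hf r hr C α hC hα hmargin hint K b n hn hrate
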